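/- arXiv:2110.15233 — 2 statements merged into one kernel-verified Lean document; each statement's English description precedes it below -/
import Mathlib

section
/- Let β > 0 and let φ : ℝ → ℝ be continuous with supp(φ) ⊆ [0, β], such that the Fourier transform φ̂ is continuous at 0 with φ̂(0) = 1. Let l > 0 and let γ : ℝ → ℝ be an l-periodic, twice continuously differentiable function, and set γ̃ := γ·1_{[−l,l]}. Fix j₀ ∈ ℤ and k₀ ∈ ℤ such that the dyadic point t := k₀·2^{−j₀} lies in the open interval (−l, l). Then lim_{j→∞} 2^{j/2} ⟨γ̃, φ_{j, k₀·2^{j−j₀}}⟩ = γ(t), where the limit is over integers j ≥ j₀; that is, for large resolution levels the rescaled approximation coefficients converge to the sample values of γ. -/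
open MeasureTheory Filter Topology

/-!
After the substitution `t = t₀ + 2^{-j} u`, with `t₀ = k₀ 2^{-j₀}` the translation point of
`φ_{j, k₀ 2^{j−j₀}}` for `j ≥ j₀`, the rescaled coefficient becomes `∫ γ̃(t₀ + 2^{-j} u) φ(u) du`.
Since `γ̃` is bounded and continuous at the interior point `t₀` and `φ` is integrable, dominated
convergence gives the limit `γ(t₀) ∫ φ = γ(t₀) φ̂(0) = γ(t₀)`.
-/

/-- `φ_{jk}(x) = 2^{j/2} φ(2^j x − k)`. -/
noncomputable def phiJK (φ : ℝ → ℝ) (j k : ℤ) (x : ℝ) : ℝ :=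
  (2:ℝ) ^ ((j:ℝ) / 2) * φ ((2:ℝ) ^ j * x - (k:ℝ))

/-- The Fourier transform `φ̂(ξ) = ∫ φ(t) e^{−2πiξt} dt`. -/
noncomputable def fourierT (φ : ℝ → ℝ) (ξ : ℝ) : ℂ :=
  ∫ t : ℝ, (φ t : ℂ) * Complex.exp (-(2 * (Real.pi : ℂ) * Complex.I * (ξ : ℂ) * (t : ℂ)))

lemma fourierT_zero (φ : ℝ → ℝ) : fourierT φ 0 = ((∫ t, φ t : ℝ) : ℂ) := by
  simp only [fourierT, Complex.ofReal_zero, mul_zero, zero_mul, neg_zero, Complex.exp_zero,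
    mul_one]
  exact integral_ofReal

lemma integral_ofReal_mul_conj_ofReal {X : Type*} [MeasurableSpace X] {μ : Measure X}
    (f g : X → ℝ) :
    ∫ x, (f x : ℂ) * (starRingEnd ℂ) (g x : ℂ) ∂μ = ((∫ x, f x * g x ∂μ : ℝ) : ℂ) := by
  simp only [Complex.conj_ofReal, ← Complex.ofReal_mul]
  exact integral_ofReal

lemma exists_forall_abs_indicator_le {X : Type*} [TopologicalSpace X] {f : X → ℝ}
    (hf : Continuous f) {s : Set X} (hs : IsCompact s) : ∃ C, ∀ x, |s.indicator f x| ≤ C := by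
  obtain ⟨C, hC⟩ := hs.exists_bound_of_continuousOn hf.continuousOn
  refine ⟨max C 0, fun x => ?_⟩
  by_cases hx : x ∈ s
  · rw [Set.indicator_of_mem hx]
    exact (hC x hx).trans (le_max_left _ _)
  · rw [Set.indicator_of_notMem hx, abs_zero]
    exact le_max_right _ _

theorem tendsto_integral_comp_add_mul_mul {ι : Type*} {L : Filter ι} [L.IsCountablyGenerated]
    {f φ : ℝ → ℝ} {ε : ι → ℝ} {x₀ C : ℝ} (hf : Measurable f) (hfC : ∀ x, |f x| ≤ C)
    (hfx₀ : ContinuousAt f x₀) (hφ : Integrable φ) (hε : Tendsto ε L (𝓝 0)) :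
    Tendsto (fun i => ∫ u, f (x₀ + ε i * u) * φ u) L (𝓝 (f x₀ * ∫ u, φ u)) := by
  rw [← integral_const_mul]
  refine tendsto_integral_filter_of_dominated_convergence (fun u => C * |φ u|) ?_ ?_ ?_ ?_
  · exact Eventually.of_forall fun i => (hf.comp (measurable_const.add
      (measurable_const.mul measurable_id))).aestronglyMeasurable.mul hφ.1
  · refine Eventually.of_forall fun i => Eventually.of_forall fun u => ?_
    rw [Real.norm_eq_abs, abs_mul]
    exact mul_le_mul_of_nonneg_right (hfC _) (abs_nonneg _)
  · exact hφ.abs.const_mul C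
  · refine Eventually.of_forall fun u => (hfx₀.tendsto.comp ?_).mul_const (φ u)
    simpa using (hε.mul_const u).const_add x₀

lemma tendsto_zpow_atTop_atTop_of_one_lt {α : Type*} [Field α] [LinearOrder α]
    [IsStrictOrderedRing α] [Archimedean α] {a : α} (ha : 1 < a) :
    Tendsto (fun n : ℤ => a ^ n) atTop atTop := by
  refine tendsto_atTop_atTop.2 fun b => ?_
  obtain ⟨N, hN⟩ := ((tendsto_pow_atTop_atTop_of_one_lt ha).eventually_ge_atTop b).exists
  exact ⟨N, fun n hn => hN.trans (by simpa using zpow_le_zpow_right₀ ha.le hn)⟩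

lemma integral_mul_comp_mul_sub (g φ : ℝ → ℝ) {c : ℝ} (hc : 0 < c) (x₀ : ℝ) :
    ∫ t, g t * φ (c * (t - x₀)) = c⁻¹ * ∫ u, g (x₀ + c⁻¹ * u) * φ u := by
  have h := Measure.integral_comp_mul_left (fun u => g (x₀ + c⁻¹ * u) * φ u) c
  rw [abs_of_pos (inv_pos.2 hc), smul_eq_mul] at h
  rw [← h, ← integral_add_left_eq_self _ x₀]
  simp [inv_mul_cancel_left₀ hc.ne']

lemma phiJK_dyadic (φ : ℝ → ℝ) {j₀ j : ℤ} (hj : j₀ ≤ j) (k₀ : ℤ) (t : ℝ) :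
    phiJK φ j (k₀ * 2 ^ (j - j₀).toNat) t
      = (2:ℝ) ^ ((j:ℝ) / 2) * φ ((2:ℝ) ^ j * (t - k₀ * (2:ℝ) ^ (-j₀))) := by
  have hk : ((k₀ * 2 ^ (j - j₀).toNat : ℤ) : ℝ) = k₀ * (2:ℝ) ^ j * (2:ℝ) ^ (-j₀) := by
    push_cast
    rw [← zpow_natCast, Int.toNat_of_nonneg (by omega), zpow_sub₀ two_ne_zero, zpow_neg]
    ring
  rw [phiJK, hk]
  ring_nf

lemma two_rpow_half_mul_integral_mul_phiJK (f φ : ℝ → ℝ) {j₀ j : ℤ} (hj : j₀ ≤ j) (k₀ : ℤ) :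
    (2:ℝ) ^ ((j:ℝ) / 2) * ∫ t, f t * phiJK φ j (k₀ * 2 ^ (j - j₀).toNat) t
      = ∫ u, f (k₀ * (2:ℝ) ^ (-j₀) + ((2:ℝ) ^ j)⁻¹ * u) * φ u := by
  have h2j : (0:ℝ) < 2 ^ j := zpow_pos two_pos j
  have hsq : (2:ℝ) ^ ((j:ℝ) / 2) * (2:ℝ) ^ ((j:ℝ) / 2) = 2 ^ j := by
    rw [← Real.rpow_add two_pos, add_halves, Real.rpow_intCast]
  simp_rw [phiJK_dyadic φ hj, mul_left_comm (f _), integral_const_mul, ← mul_assoc, hsq,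
    integral_mul_comp_mul_sub f φ h2j, ← mul_assoc, mul_inv_cancel₀ h2j.ne', one_mul]

theorem stmt4_general
    (β : ℝ)
    (φ : ℝ → ℝ) (hφc : Continuous φ)
    (hsupp : Function.support φ ⊆ Set.Icc 0 β)
    (hone : fourierT φ 0 = 1)
    (l : ℝ)
    (γ : ℝ → ℝ) (hsm : ContDiff ℝ 2 γ)
    (j₀ k₀ : ℤ) (ht : (k₀ : ℝ) * (2:ℝ) ^ (-j₀) ∈ Set.Ioo (-l) l) :
    Tendsto (fun j : ℤ => (((2:ℝ) ^ ((j:ℝ) / 2) : ℝ) : ℂ) *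
        ∫ t : ℝ, ((Set.indicator (Set.Icc (-l) l) γ t : ℝ) : ℂ) *
          (starRingEnd ℂ) ((phiJK φ j (k₀ * 2 ^ (j - j₀).toNat) t : ℝ) : ℂ))
      atTop (𝓝 ((γ ((k₀ : ℝ) * (2:ℝ) ^ (-j₀)) : ℝ) : ℂ)) := by
  set t₀ : ℝ := k₀ * (2:ℝ) ^ (-j₀)
  set γ' := Set.indicator (Set.Icc (-l) l) γ
  have hγ := hsm.continuous
  have hφ : Integrable φ := hφc.integrable_of_hasCompactSupport
    (HasCompactSupport.of_support_subset_isCompact isCompact_Icc hsupp)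
  have hφ_one : ∫ u, φ u = 1 := by exact_mod_cast (fourierT_zero φ).symm.trans hone
  obtain ⟨C, hC⟩ := exists_forall_abs_indicator_le hγ (isCompact_Icc (a := -l) (b := l))
  have hγ't₀ : ContinuousAt γ' t₀ := hγ.continuousAt.congr <|
    eventually_of_mem (Ioo_mem_nhds ht.1 ht.2) fun x hx =>
      (Set.indicator_of_mem (Set.Ioo_subset_Icc_self hx) γ).symm
  have hscale : Tendsto (fun j : ℤ => ((2:ℝ) ^ j)⁻¹) atTop (𝓝 0) :=
    tendsto_inv_atTop_zero.comp (tendsto_zpow_atTop_atTop_of_one_lt one_lt_two)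
  have key := tendsto_integral_comp_add_mul_mul (hγ.measurable.indicator measurableSet_Icc) hC
    hγ't₀ hφ hscale
  rw [hφ_one, mul_one, Set.indicator_of_mem (Set.Ioo_subset_Icc_self ht)] at key
  refine ((Complex.continuous_ofReal.tendsto _).comp key).congr' ?_
  filter_upwards [eventually_ge_atTop j₀] with j hj
  rw [integral_ofReal_mul_conj_ofReal, ← Complex.ofReal_mul,
    two_rpow_half_mul_integral_mul_phiJK γ' φ hj]
  rfl

/-- for continuous `φ` supported on `[0, β]` with `φ̂` continuous at `0` and
`φ̂(0) = 1`, an `l`-periodic `C²` map `γ`, `γ̃ = γ·1_{[−l,l]}`, and a dyadic point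
`t = k₀ 2^{−j₀} ∈ (−l, l)`, the rescaled approximation coefficients
`2^{j/2} ⟨γ̃, φ_{j, k₀ 2^{j−j₀}}⟩` converge to the sample value `γ(t)` as `j → ∞`. -/
theorem stmt4
    (β : ℝ) (hβ : 0 < β)
    (φ : ℝ → ℝ) (hφc : Continuous φ)
    (hsupp : Function.support φ ⊆ Set.Icc 0 β)
    (hcont : ContinuousAt (fourierT φ) 0) (hone : fourierT φ 0 = 1)
    (l : ℝ) (hl : 0 < l)
    (γ : ℝ → ℝ) (hper : Function.Periodic γ l) (hsm : ContDiff ℝ 2 γ)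
    (j₀ k₀ : ℤ) (ht : (k₀ : ℝ) * (2:ℝ) ^ (-j₀) ∈ Set.Ioo (-l) l) :
    Tendsto (fun j : ℤ => (((2:ℝ) ^ ((j:ℝ) / 2) : ℝ) : ℂ) *
        ∫ t : ℝ, ((Set.indicator (Set.Icc (-l) l) γ t : ℝ) : ℂ) *
          (starRingEnd ℂ) ((phiJK φ j (k₀ * 2 ^ (j - j₀).toNat) t : ℝ) : ℂ))
      atTop (𝓝 ((γ ((k₀ : ℝ) * (2:ℝ) ^ (-j₀)) : ℝ) : ℂ)) :=
  stmt4_general β φ hφc hsupp hone l γ hsm j₀ k₀ ht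
end

section
/- Let V be a closed subspace of L²(ℝ) (a Hilbert space), let (e_l)_{l∈ℤ} be an orthonormal family spanning a dense subspace of V, and let h, g : ℤ → ℂ be finitely supported. For m ∈ ℤ define u_m := Σ_{l∈ℤ} h_{l−2m} e_l and v_m := Σ_{l∈ℤ} g_{l−2m} e_l, and assume that the combined family (u_m)_{m∈ℤ} ∪ (v_m)_{m∈ℤ} is an orthonormal family spanning a dense subspace of V. Then for every γ ∈ V and every k ∈ ℤ, ⟨γ, e_k⟩ = Σ_{m∈ℤ} h_{k−2m} ⟨γ, u_m⟩ + Σ_{m∈ℤ} g_{k−2m} ⟨γ, v_m⟩. (In the wavelet setting, with e_l = φ_{j+1,l}, u_m = φ_{jm}, v_m = ψ_{jm}, this is the reconstruction step of the Pyramid Algorithm: a_{j+1} = C_h M⁺ a_j + C_g M⁺ d_j.) -/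
/-! Since `⟪e k, u m⟫ = h (k - 2m)` and `⟪e k, v m⟫ = g (k - 2m)`, the vector `e k` has only
finitely many nonzero coefficients against the orthonormal family `(u, v)`. So
`x ↦ ⟪e k, x⟫ - ∑ᵢ ⟪e k, wᵢ⟫ ⟪wᵢ, x⟫` is a continuous functional (a finite sum) that vanishes
on every `wᵢ`, hence on the closed span `V` of `(u, v)`. -/

open MeasureTheory Function

section

variable {𝕜 E ι : Type*} [RCLike 𝕜] [NormedAddCommGroup E] [InnerProductSpace 𝕜 E]

theorem Orthonormal.inner_right_finsum {v : ι → E} (hv : Orthonormal 𝕜 v) {c : ι → 𝕜}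
    (hc : (support c).Finite) (i : ι) : inner 𝕜 (v i) (∑ᶠ l, c l • v l) = c i := by
  classical
  have hsupp : support (fun l => c l • v l) ⊆ ↑(insert i hc.toFinset) := by
    intro l hl
    simp only [Finset.coe_insert, Set.Finite.coe_toFinset]
    exact Or.inr (support_smul_subset_left c v hl)
  rw [finsum_eq_sum_of_support_subset _ hsupp]
  exact hv.inner_right_sum c (Finset.mem_insert_self i _)

theorem Orthonormal.inner_eq_sum_of_mem_closure_span {w : ι → E} (hw : Orthonormal 𝕜 w) {y : E}
    {s : Finset ι} (hs : ∀ i ∉ s, inner 𝕜 y (w i) = 0) {x : E}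
    (hx : x ∈ closure (Submodule.span 𝕜 (Set.range w) : Set E)) :
    inner 𝕜 y x = ∑ i ∈ s, inner 𝕜 y (w i) * inner 𝕜 (w i) x := by
  classical
  have hrange : Set.EqOn (innerSL 𝕜 y)
      ⇑(∑ i ∈ s, inner 𝕜 y (w i) • innerSL 𝕜 (w i) : E →L[𝕜] 𝕜) (Set.range w) := by
    rintro _ ⟨j, rfl⟩
    by_cases hj : j ∈ s
    · simp [orthonormal_iff_ite.mp hw, hj]
    · simp [orthonormal_iff_ite.mp hw, hj, hs j hj]
  simpa using ContinuousLinearMap.eqOn_closure_span hrange hx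

end

theorem stmt8_general
    (V : Submodule ℂ (Lp ℂ 2 (volume : Measure ℝ)))
    (e : ℤ → Lp ℂ 2 (volume : Measure ℝ)) (hON : Orthonormal ℂ e)
    (h g : ℤ → ℂ) (hh : (Function.support h).Finite) (hg : (Function.support g).Finite)
    (u v : ℤ → Lp ℂ 2 (volume : Measure ℝ))
    (hu : ∀ m : ℤ, u m = ∑ᶠ l : ℤ, h (l - 2 * m) • e l)
    (hv : ∀ m : ℤ, v m = ∑ᶠ l : ℤ, g (l - 2 * m) • e l)
    (hON2 : Orthonormal ℂ (Sum.elim u v))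
    (hspan2 : (Submodule.span ℂ (Set.range (Sum.elim u v))).topologicalClosure = V)
    (γ : Lp ℂ 2 (volume : Measure ℝ)) (hγ : γ ∈ V) (k : ℤ) :
    (inner ℂ (e k) γ : ℂ)
      = (∑ᶠ m : ℤ, h (k - 2 * m) * (inner ℂ (u m) γ : ℂ))
        + ∑ᶠ m : ℤ, g (k - 2 * m) * (inner ℂ (v m) γ : ℂ) := by
  have hA : (support fun m : ℤ => h (k - 2 * m)).Finite := hh.preimage fun a _ b _ _ => by omega
  have hB : (support fun m : ℤ => g (k - 2 * m)).Finite := hg.preimage fun a _ b _ _ => by omega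
  have hcoef_u (m : ℤ) : inner ℂ (e k) (u m) = h (k - 2 * m) := by
    rw [hu m]
    exact hON.inner_right_finsum (hh.preimage fun a _ b _ _ => by omega) k
  have hcoef_v (m : ℤ) : inner ℂ (e k) (v m) = g (k - 2 * m) := by
    rw [hv m]
    exact hON.inner_right_finsum (hg.preimage fun a _ b _ _ => by omega) k
  have hs : ∀ i ∉ hA.toFinset.disjSum hB.toFinset, inner ℂ (e k) (Sum.elim u v i) = 0 := by
    rintro (m | m) hm <;> simpa [hcoef_u, hcoef_v] using hm
  have hγ' : γ ∈ closure (Submodule.span ℂ (Set.range (Sum.elim u v)) : Set _) := by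
    rwa [← Submodule.topologicalClosure_coe, hspan2]
  rw [hON2.inner_eq_sum_of_mem_closure_span hs hγ', Finset.sum_disjSum,
    finsum_eq_sum_of_support_subset _ (s := hA.toFinset) ?_,
    finsum_eq_sum_of_support_subset _ (s := hB.toFinset) ?_]
  · simp [hcoef_u, hcoef_v]
  all_goals exact (Set.Finite.coe_toFinset _).symm ▸ support_mul_subset_left _ _

/-- reconstruction step of the Pyramid Algorithm: in the Hilbert space
`L²(ℝ)`, let `V` be the closed subspace spanned by an orthonormal family `(e_l)`, let
`h, g : ℤ → ℂ` be finitely supported, and set `u_m := Σ_l h_{l−2m} e_l`,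
`v_m := Σ_l g_{l−2m} e_l`.  If the combined family `(u_m) ∪ (v_m)` is orthonormal and
spans a dense subspace of `V`, then for every `γ ∈ V` and every `k`,
`⟨γ, e_k⟩ = Σ_m h_{k−2m} ⟨γ, u_m⟩ + Σ_m g_{k−2m} ⟨γ, v_m⟩`.
(The paper's inner product `⟨x, y⟩` is conjugate-linear in the second argument, i.e. it
is Mathlib's `⟪y, x⟫`.) -/
theorem stmt8
    (V : Submodule ℂ (Lp ℂ 2 (volume : Measure ℝ)))
    (e : ℤ → Lp ℂ 2 (volume : Measure ℝ)) (hON : Orthonormal ℂ e)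
    (hspan : (Submodule.span ℂ (Set.range e)).topologicalClosure = V)
    (h g : ℤ → ℂ) (hh : (Function.support h).Finite) (hg : (Function.support g).Finite)
    (u v : ℤ → Lp ℂ 2 (volume : Measure ℝ))
    (hu : ∀ m : ℤ, u m = ∑ᶠ l : ℤ, h (l - 2 * m) • e l)
    (hv : ∀ m : ℤ, v m = ∑ᶠ l : ℤ, g (l - 2 * m) • e l)
    (hON2 : Orthonormal ℂ (Sum.elim u v))
    (hspan2 : (Submodule.span ℂ (Set.range (Sum.elim u v))).topologicalClosure = V)
    (γ : Lp ℂ 2 (volume : Measure ℝ)) (hγ : γ ∈ V) (k : ℤ) :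
    (inner ℂ (e k) γ : ℂ)
      = (∑ᶠ m : ℤ, h (k - 2 * m) * (inner ℂ (u m) γ : ℂ))
        + ∑ᶠ m : ℤ, g (k - 2 * m) * (inner ℂ (v m) γ : ℂ) :=
  stmt8_general V e hON h g hh hg u v hu hv hON2 hspan2 γ hγ k
end
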